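/- Let L be a timed language, K ∈ ℕ, and ≈ an L-preserving, K-monotonic equivalence on timed words of finite index. Then the strict one-clock deterministic integer-reset timed automaton A_≈ built from ≈ recognizes exactly L, i.e., L(A_≈) = L. -/

import Mathlib

open scoped NNReal Classical

namespace IRTA

/-- A timestamp is a finite sequence of non-negative reals. -/
abbrev Timestamp : Type := List ℝ≥0

/-- A timed word is a finite sequence of (delay, letter) pairs. -/
abbrev TimedWord (A : Type) : Type := List (ℝ≥0 × A)

/-- Fractional part of a non-negative real. -/
noncomputable def fracPart (x : ℝ≥0) : ℝ≥0 := x - (⌊x⌋₊ : ℝ≥0)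

/-- `x` is a natural-number value. -/
def IsNatVal (x : ℝ≥0) : Prop := ∃ m : ℕ, x = (m : ℝ≥0)

/-- Region equivalence `≡^K`. -/
def RegEq (K : ℕ) (x y : ℝ≥0) : Prop :=
  (⌊x⌋₊ = ⌊y⌋₊ ∧ (fracPart x = 0 ↔ fracPart y = 0)) ∨ ((K : ℝ≥0) < x ∧ (K : ℝ≥0) < y)

/-- One step of the (greedy) clock evolution: reset whenever the value is an
integer between `0` and `K`. -/
noncomputable def resetStep (K : ℕ) (v : ℝ≥0) : ℝ≥0 :=
  if ∃ m : ℕ, m ≤ K ∧ v = (m : ℝ≥0) then 0 else v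

/-- Auxiliary function computing `c^K` with accumulator `v`. -/
noncomputable def cKAux (K : ℕ) : ℝ≥0 → Timestamp → ℝ≥0
  | v, [] => v
  | v, t :: d => cKAux K (resetStep K (v + t)) d

/-- `c^K(d)`: the sum of the delays after the last integral position of `d`. -/
noncomputable def cK (K : ℕ) (d : Timestamp) : ℝ≥0 := cKAux K 0 d

/-- `c^K` of a timed word is `c^K` of its timestamp. -/
noncomputable def cKW {A : Type} (K : ℕ) (w : TimedWord A) : ℝ≥0 :=
  cK K (w.map Prod.fst)

/-- `c^K_⊤` : `c^K` truncated at `K`. -/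
noncomputable def cKTop {A : Type} (K : ℕ) (w : TimedWord A) : WithTop ℝ≥0 :=
  if cKW K w ≤ (K : ℝ≥0) then ((cKW K w : ℝ≥0) : WithTop ℝ≥0) else ⊤

/-! ### Clock constraints and one-clock timed automata -/

/-- Clock constraints `φ ::= x < m | m < x | x = m | φ ∧ φ`. -/
inductive CC : Type where
  | lt : ℕ → CC
  | gt : ℕ → CC
  | eq : ℕ → CC
  | and : CC → CC → CC

/-- Satisfaction of a clock constraint by a clock value. -/
def CC.sat : CC → ℝ≥0 → Prop
  | .lt m, x => x < (m : ℝ≥0)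
  | .gt m, x => (m : ℝ≥0) < x
  | .eq m, x => x = (m : ℝ≥0)
  | .and φ ψ, x => φ.sat x ∧ ψ.sat x

/-- The largest constant appearing in a clock constraint. -/
def CC.maxConst : CC → ℕ
  | .lt m => m
  | .gt m => m
  | .eq m => m
  | .and φ ψ => max φ.maxConst ψ.maxConst

/-- A transition of a one-clock timed automaton; `reset = true` means the
clock is reset (the `r = 0` case). -/
structure TTrans (Q A : Type) where
  src : Q
  dst : Q
  lab : A
  guard : CC
  reset : Bool

/-- A one-clock timed automaton. -/
structure TA (A : Type) where
  Q : Type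
  init : Q
  final : Set Q
  trans : Set (TTrans Q A)

/-- The automaton has finitely many states and transitions. -/
def TA.IsFinite {A : Type} (M : TA A) : Prop := Finite M.Q ∧ M.trans.Finite

/-- Runs of a one-clock timed automaton between configurations. -/
inductive Steps {A : Type} (M : TA A) : M.Q × ℝ≥0 → TimedWord A → M.Q × ℝ≥0 → Prop
  | nil (c : M.Q × ℝ≥0) : Steps M c [] c
  | cons {q : M.Q} {ν t : ℝ≥0} {a : A} {w : TimedWord A} {c : M.Q × ℝ≥0}
      (θ : TTrans M.Q A) (hθ : θ ∈ M.trans) (hsrc : θ.src = q) (hlab : θ.lab = a)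
      (hg : θ.guard.sat (ν + t))
      (hrest : Steps M (θ.dst, if θ.reset then 0 else ν + t) w c) :
      Steps M (q, ν) ((t, a) :: w) c

/-- The language of `M` from a given configuration. -/
def TA.LangFrom {A : Type} (M : TA A) (c : M.Q × ℝ≥0) : Set (TimedWord A) :=
  {w | ∃ q' : M.Q, ∃ ν' : ℝ≥0, Steps M c w (q', ν') ∧ q' ∈ M.final}

/-- The language of `M` (from the initial configuration). -/
def TA.Lang {A : Type} (M : TA A) : Set (TimedWord A) := M.LangFrom (M.init, 0)

/-- Determinism: distinct transitions with the same source and letter have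
disjoint guards. -/
def TA.Deterministic {A : Type} (M : TA A) : Prop :=
  ∀ θ₁ ∈ M.trans, ∀ θ₂ ∈ M.trans, θ₁ ≠ θ₂ → θ₁.src = θ₂.src → θ₁.lab = θ₂.lab →
    ∀ x : ℝ≥0, ¬ (θ₁.guard.sat x ∧ θ₂.guard.sat x)

/-- Completeness: every timed word admits a run from the initial configuration. -/
def TA.Complete {A : Type} (M : TA A) : Prop :=
  ∀ w : TimedWord A, ∃ c : M.Q × ℝ≥0, Steps M (M.init, 0) w c

/-- A 1-IRTA: every resetting transition has an equality guard. -/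
def TA.IsIRTA {A : Type} (M : TA A) : Prop :=
  ∀ θ ∈ M.trans, θ.reset = true → ∃ m : ℕ, θ.guard = CC.eq m

/-- Guards allowed in a strict 1-IRTA with constant `K`. -/
def StrictGuard (K : ℕ) (φ : CC) : Prop :=
  (∃ m : ℕ, φ = CC.eq m) ∨ (∃ m : ℕ, φ = CC.and (CC.gt m) (CC.lt (m + 1))) ∨ φ = CC.gt K

/-- Strictness with constant `K`: every guard is of one of the allowed forms
and a guard is an equality iff the transition resets. -/
def TA.IsStrict {A : Type} (M : TA A) (K : ℕ) : Prop :=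
  ∀ θ ∈ M.trans, StrictGuard K θ.guard ∧ ((∃ m : ℕ, θ.guard = CC.eq m) ↔ θ.reset = true)

/-- All constants appearing in guards are at most `K`. -/
def TA.MaxConstLE {A : Type} (M : TA A) (K : ℕ) : Prop :=
  ∀ θ ∈ M.trans, θ.guard.maxConst ≤ K

/-- `M` reaches the same control state on reading `u` and `v` from the initial
configuration. -/
def TA.SameState {A : Type} (M : TA A) (u v : TimedWord A) : Prop :=
  ∃ q : M.Q, ∃ ν ν' : ℝ≥0, Steps M (M.init, 0) u (q, ν) ∧ Steps M (M.init, 0) v (q, ν')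

/-- A `K`-acceptor. -/
def IsKAcceptor {A : Type} (M : TA A) (K : ℕ) : Prop :=
  M.IsFinite ∧ M.Complete ∧ M.Deterministic ∧ M.IsIRTA ∧ M.IsStrict K ∧ M.MaxConstLE K ∧
    ∀ u v : TimedWord A, M.SameState u v → RegEq K (cKW K u) (cKW K v)

/-! ### Equivalences on timed words -/

/-- `L`-preservation of a relation on timed words. -/
def LPreserving {A : Type} (L : Set (TimedWord A)) (r : TimedWord A → TimedWord A → Prop) :
    Prop :=
  ∀ u v : TimedWord A, r u v → (u ∈ L ↔ v ∈ L)

/-- `K`-monotonicity of a relation on timed words. -/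
def KMonotonic {A : Type} (K : ℕ) (r : TimedWord A → TimedWord A → Prop) : Prop :=
  ∀ u v : TimedWord A, r u v →
    RegEq K (cKW K u) (cKW K v) ∧
      ∀ (a : A) (t t' : ℝ≥0), RegEq K (cKW K u + t) (cKW K v + t') →
        r (u ++ [(t, a)]) (v ++ [(t', a)])

/-- Finite index: there are finitely many classes `{v | r u v}`. -/
def FiniteIndex {A : Type} (r : TimedWord A → TimedWord A → Prop) : Prop :=
  Set.Finite (Set.range fun u : TimedWord A => {v : TimedWord A | r u v})

/-! ### The rescaling maps -/

/-- The bijection `f_{λ→λ'}` of the open unit interval. -/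
noncomputable def fScale (lam lam' t : ℝ≥0) : ℝ≥0 :=
  if t ≤ lam then (lam' / lam) * t else lam' + ((1 - lam') / (1 - lam)) * (t - lam)

/-- The new delay `t'` computed from the current clock values `y, y'` and delay `t`. -/
noncomputable def tauStep (K : ℕ) (y y' t : ℝ≥0) : ℝ≥0 :=
  if (IsNatVal y ∧ IsNatVal y') ∨ ((K : ℝ≥0) < y ∧ (K : ℝ≥0) < y') then t
  else (⌊t⌋₊ : ℝ≥0) + fScale (1 - fracPart y) (1 - fracPart y') (fracPart t)

/-- Auxiliary rescaling map on timestamps, carrying the current clock values. -/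
noncomputable def tauAux (K : ℕ) : ℝ≥0 → ℝ≥0 → Timestamp → Timestamp
  | _, _, [] => []
  | y, y', t :: d =>
      tauStep K y y' t ::
        tauAux K (resetStep K (y + t)) (resetStep K (y' + tauStep K y y' t)) d

/-- The rescaling map `τ_{x→x'}` on timestamps. -/
noncomputable def tau (K : ℕ) (x x' : ℝ≥0) (d : Timestamp) : Timestamp :=
  tauAux K (resetStep K x) (resetStep K x') d

/-- Auxiliary rescaling map on timed words. -/
noncomputable def tauWAux {A : Type} (K : ℕ) : ℝ≥0 → ℝ≥0 → TimedWord A → TimedWord A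
  | _, _, [] => []
  | y, y', (t, a) :: w =>
      (tauStep K y y' t, a) ::
        tauWAux K (resetStep K (y + t)) (resetStep K (y' + tauStep K y y' t)) w

/-- The rescaling map `τ_{x→x'}` on timed words. -/
noncomputable def tauW {A : Type} (K : ℕ) (x x' : ℝ≥0) (w : TimedWord A) : TimedWord A :=
  tauWAux K (resetStep K x) (resetStep K x') w

/-! ### Residuals and the syntactic equivalence -/

/-- The residual language `u^{-1}L`. -/
def residual {A : Type} (L : Set (TimedWord A)) (u : TimedWord A) : Set (TimedWord A) :=
  {w : TimedWord A | u ++ w ∈ L}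

/-- The syntactic equivalence `≈^{L,K}`. -/
def ApproxLK {A : Type} (L : Set (TimedWord A)) (K : ℕ) (u v : TimedWord A) : Prop :=
  RegEq K (cKW K u) (cKW K v) ∧
    (tauW K (cKW K u) (cKW K v)) '' (residual L u) = residual L v

/-! ### The automaton built from a monotonic equivalence -/

/-- The region guard `φ([t])`. -/
noncomputable def phiOf (K : ℕ) (t : ℝ≥0) : CC :=
  if t ≤ (K : ℝ≥0) then
    (if IsNatVal t then CC.eq ⌊t⌋₊ else CC.and (CC.gt ⌊t⌋₊) (CC.lt (⌊t⌋₊ + 1)))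
  else CC.gt K

/-- The automaton `A_≈` built from an equivalence `s` on timed words. -/
noncomputable def Aapprox {A : Type} (L : Set (TimedWord A)) (K : ℕ)
    (s : Setoid (TimedWord A)) : TA A where
  Q := Quotient s
  init := Quotient.mk s ([] : TimedWord A)
  final := {q : Quotient s | ∃ u : TimedWord A, q = Quotient.mk s u ∧ u ∈ L}
  trans := {θ : TTrans (Quotient s) A |
    ∃ (u : TimedWord A) (a : A) (t : ℝ≥0),
      θ.src = Quotient.mk s u ∧ θ.dst = Quotient.mk s (u ++ [(t, a)]) ∧ θ.lab = a ∧
      θ.guard = phiOf K (cKW K u + t) ∧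
      (θ.reset = true ↔ ∃ m : ℕ, m ≤ K ∧ cKW K u + t = (m : ℝ≥0))}

/-! ### Half-integral and small words -/

/-- Every delay has fractional part `0` or `1/2`. -/
def HalfIntegral {A : Type} (w : TimedWord A) : Prop :=
  ∀ p ∈ w, fracPart p.1 = 0 ∨ fracPart p.1 = 1 / 2

/-- Every delay is `< K + 1`. -/
def SmallWord {A : Type} (K : ℕ) (w : TimedWord A) : Prop :=
  ∀ p ∈ w, p.1 < (K : ℝ≥0) + 1

/-- The delays of `Σ_K`: half-integral values `≤ K + 1/2`. -/
def IsSigmaK (K : ℕ) (t : ℝ≥0) : Prop :=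
  (fracPart t = 0 ∨ fracPart t = 1 / 2) ∧ t ≤ (K : ℝ≥0) + 1 / 2

/-- Words over `Σ_K` (small half-integral words). -/
def SigmaWord {A : Type} (K : ℕ) (w : TimedWord A) : Prop :=
  ∀ p ∈ w, IsSigmaK K p.1



/-! ### `K`-acceptors with their region representatives -/

/-- A `K`-acceptor bundled with the half-integral representative of the
unique region of each state. -/
structure KAcc (A : Type) (K : ℕ) where
  M : TA A
  acc : IsKAcceptor M K
  reg : M.Q → ℝ≥0
  regHalf : ∀ q : M.Q, fracPart (reg q) = 0 ∨ fracPart (reg q) = 1 / 2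
  regLe : ∀ q : M.Q, reg q ≤ (K : ℝ≥0) + 1 / 2
  regSpec : ∀ (w : TimedWord A) (q : M.Q) (x : ℝ≥0),
    Steps M (M.init, 0) w (q, x) → RegEq K x (reg q)

/-- The minimization equivalences `∼^i` on the states of a `K`-acceptor. -/
def simEq {A : Type} {K : ℕ} (B : KAcc A K) : ℕ → B.M.Q → B.M.Q → Prop
  | 0, p, q => B.reg p = B.reg q ∧ (p ∈ B.M.final ↔ q ∈ B.M.final)
  | i + 1, p, q => simEq B i p q ∧
      ∀ (t : ℝ≥0) (a : A), IsSigmaK K t →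
        ∀ θ₁ θ₂ : TTrans B.M.Q A, θ₁ ∈ B.M.trans → θ₂ ∈ B.M.trans →
          θ₁.src = p → θ₂.src = q → θ₁.lab = a → θ₂.lab = a →
          θ₁.guard = phiOf K t → θ₂.guard = phiOf K t →
          simEq B i θ₁.dst θ₂.dst

/-- The quotient automaton `B/∼^m`. -/
noncomputable def quotTA {A : Type} {K : ℕ} (B : KAcc A K) (m : ℕ) : TA A where
  Q := Quot (simEq B m)
  init := Quot.mk (simEq B m) B.M.init
  final := {c : Quot (simEq B m) | ∃ q ∈ B.M.final, c = Quot.mk (simEq B m) q}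
  trans := {θ : TTrans (Quot (simEq B m)) A |
    ∃ θ₀ ∈ B.M.trans,
      θ.src = Quot.mk (simEq B m) θ₀.src ∧ θ.dst = Quot.mk (simEq B m) θ₀.dst ∧
      θ.lab = θ₀.lab ∧ θ.guard = θ₀.guard ∧ θ.reset = θ₀.reset}

/-! ### Observation tables -/

/-- An observation table over `Σ_K`. -/
structure ObsTable (A : Type) (K : ℕ) where
  U1 : Set (TimedWord A)
  E : Set (TimedWord A)
  val : TimedWord A → TimedWord A → Bool
  U1fin : U1.Finite
  Efin : E.Finite
  U1sigma : ∀ u ∈ U1, SigmaWord K u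
  Esigma : ∀ e ∈ E, SigmaWord K e
  epsU1 : ([] : TimedWord A) ∈ U1
  prefixClosed : ∀ (u : TimedWord A) (x : ℝ≥0 × A), u ++ [x] ∈ U1 → u ∈ U1
  epsE : ([] : TimedWord A) ∈ E
  suffixClosed : ∀ (x : ℝ≥0 × A) (e : TimedWord A), x :: e ∈ E → e ∈ E

/-- The set `U2` of one-letter `Σ_K`-extensions of `U1`. -/
def obsU2 {A : Type} {K : ℕ} (T : ObsTable A K) : Set (TimedWord A) :=
  {w : TimedWord A | ∃ u ∈ T.U1, ∃ (t : ℝ≥0) (a : A), IsSigmaK K t ∧ w = u ++ [(t, a)]}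

/-- `R(u)`: the row of `u` (restricted to `E`) together with `c^K_⊤(u)`. -/
noncomputable def Rof {A : Type} {K : ℕ} (T : ObsTable A K) (u : TimedWord A) :
    ({e : TimedWord A // e ∈ T.E} → Bool) × WithTop ℝ≥0 :=
  (fun e => T.val u e.1, cKTop K u)

/-- The table is closed. -/
def ObsTable.Closed {A : Type} {K : ℕ} (T : ObsTable A K) : Prop :=
  ∀ w ∈ obsU2 T, ∃ u ∈ T.U1, Rof T w = Rof T u

/-- The table is consistent. -/
def ObsTable.Consistent {A : Type} {K : ℕ} (T : ObsTable A K) : Prop :=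
  ∀ u ∈ T.U1, ∀ w ∈ T.U1, Rof T u = Rof T w →
    ∀ (t : ℝ≥0) (a : A), IsSigmaK K t → Rof T (u ++ [(t, a)]) = Rof T (w ++ [(t, a)])

/-- The automaton `A_𝒯` induced by a (closed and consistent) observation table. -/
noncomputable def ATable {A : Type} {K : ℕ} (T : ObsTable A K) : TA A where
  Q := {f : ({e : TimedWord A // e ∈ T.E} → Bool) × WithTop ℝ≥0 // ∃ u ∈ T.U1, f = Rof T u}
  init := ⟨Rof T [], ⟨[], T.epsU1, rfl⟩⟩
  final := {q | ∃ u ∈ T.U1, q.1 = Rof T u ∧ T.val u [] = true}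
  trans := {θ | ∃ u ∈ T.U1, ∃ (t : ℝ≥0) (a : A), IsSigmaK K t ∧
      θ.src.1 = Rof T u ∧ θ.dst.1 = Rof T (u ++ [(t, a)]) ∧ θ.lab = a ∧
      θ.guard = phiOf K (cKW K u + t) ∧
      (θ.reset = true ↔ ∃ m : ℕ, m ≤ K ∧ cKW K u + t = (m : ℝ≥0))}

/-- A `K`-acceptor is consistent with the observation table `𝒯`. -/
def ConsistentWith {A : Type} {K : ℕ} (M : TA A) (T : ObsTable A K) : Prop :=
  ∀ w : TimedWord A, (w ∈ T.U1 ∨ w ∈ obsU2 T) → ∀ e ∈ T.E,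
    ∀ (q : M.Q) (ν : ℝ≥0), Steps M (M.init, 0) (w ++ e) (q, ν) →
      (q ∈ M.final ↔ T.val w e = true)

/-- Isomorphism of one-clock timed automata. -/
structure TAIso {A : Type} (M N : TA A) where
  toEquiv : M.Q ≃ N.Q
  init_eq : toEquiv M.init = N.init
  final_iff : ∀ q : M.Q, q ∈ M.final ↔ toEquiv q ∈ N.final
  trans_iff : ∀ θ : TTrans M.Q A,
    θ ∈ M.trans ↔
      (⟨toEquiv θ.src, toEquiv θ.dst, θ.lab, θ.guard, θ.reset⟩ : TTrans N.Q A) ∈ N.trans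


/-!
On reading `w`, the automaton `A_≈` can always move from `([u], c^K(u))` to
`([u w], c^K(u w))`: this is the transition built from `u` itself. Conversely, a transition
taken from `[u]` was built from some `u' ≈ u`, and its guard `φ([c^K(u') + t'])` forces
`c^K(u') + t' ≡^K c^K(u) + t`; `K`-monotonicity then puts its target in the class of
`u (t·a)`, and the reset flag matches the greedy reset of `c^K`. So the run on `w` ends in
`[w]`, which is final iff `w ∈ L` since `≈` is `L`-preserving.
-/

lemma fracPart_eq_zero_iff (x : ℝ≥0) : fracPart x = 0 ↔ IsNatVal x := by
  rw [fracPart, tsub_eq_zero_iff_le]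
  constructor
  · exact fun h => ⟨⌊x⌋₊, le_antisymm h (Nat.floor_le (zero_le : 0 ≤ x))⟩
  · rintro ⟨m, rfl⟩
    simp

namespace RegEq

variable {K : ℕ} {x y : ℝ≥0}

lemma refl (K : ℕ) (x : ℝ≥0) : RegEq K x x := Or.inl ⟨rfl, Iff.rfl⟩

lemma symm (h : RegEq K x y) : RegEq K y x := by
  rcases h with ⟨hfloor, hfrac⟩ | ⟨hx, hy⟩
  · exact Or.inl ⟨hfloor.symm, hfrac.symm⟩
  · exact Or.inr ⟨hy, hx⟩

lemma exists_nat_le (h : RegEq K x y) (hx : ∃ m : ℕ, m ≤ K ∧ x = m) :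
    ∃ m : ℕ, m ≤ K ∧ y = m := by
  obtain ⟨m, hm, rfl⟩ := hx
  rcases h with ⟨hfloor, hfrac⟩ | ⟨hx, -⟩
  · obtain ⟨n, rfl⟩ := (fracPart_eq_zero_iff y).1 (hfrac.1 ((fracPart_eq_zero_iff _).2 ⟨m, rfl⟩))
    rw [Nat.floor_natCast, Nat.floor_natCast] at hfloor
    exact ⟨n, hfloor ▸ hm, rfl⟩
  · exact absurd hx (not_lt.2 (by exact_mod_cast hm))

lemma exists_nat_le_iff (h : RegEq K x y) :
    (∃ m : ℕ, m ≤ K ∧ x = m) ↔ ∃ m : ℕ, m ≤ K ∧ y = m :=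
  ⟨h.exists_nat_le, h.symm.exists_nat_le⟩

end RegEq

lemma sat_phiOf_self (K : ℕ) (x : ℝ≥0) : (phiOf K x).sat x := by
  unfold phiOf
  split_ifs with hK hnat
  · obtain ⟨m, rfl⟩ := hnat
    simp [CC.sat]
  · refine ⟨(Nat.floor_le (zero_le : 0 ≤ x)).lt_of_ne fun h => hnat ⟨⌊x⌋₊, h.symm⟩, ?_⟩
    simpa [CC.sat] using Nat.lt_floor_add_one x
  · exact lt_of_not_ge hK

lemma regEq_of_sat_phiOf {K : ℕ} {x y : ℝ≥0} (h : (phiOf K x).sat y) : RegEq K x y := by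
  unfold phiOf at h
  split_ifs at h with hK hnat
  · obtain ⟨m, rfl⟩ := hnat
    have hy : y = m := by simpa [CC.sat] using h
    exact hy ▸ RegEq.refl K m
  · obtain ⟨hlo, hhi⟩ := h
    have hfloor : ⌊y⌋₊ = ⌊x⌋₊ :=
      (Nat.floor_eq_iff (zero_le : 0 ≤ y)).2 ⟨hlo.le, by simpa [CC.sat] using hhi⟩
    have hy : ¬ IsNatVal y := by
      rintro ⟨n, rfl⟩
      rw [Nat.floor_natCast] at hfloor
      exact (hfloor ▸ hlo).false
    refine Or.inl ⟨hfloor.symm, ?_⟩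
    rw [fracPart_eq_zero_iff, fracPart_eq_zero_iff]
    exact iff_of_false hnat hy
  · exact Or.inr ⟨lt_of_not_ge hK, h⟩

lemma cKAux_append_singleton (K : ℕ) (v t : ℝ≥0) (d : Timestamp) :
    cKAux K v (d ++ [t]) = resetStep K (cKAux K v d + t) := by
  induction d generalizing v with
  | nil => rfl
  | cons t' d ih => exact ih _

lemma cKW_append_singleton {A : Type} (K : ℕ) (w : TimedWord A) (t : ℝ≥0) (a : A) :
    cKW K (w ++ [(t, a)]) = resetStep K (cKW K w + t) := by
  rw [cKW, cK, List.map_append]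
  exact cKAux_append_singleton K 0 t _

lemma resetStep_eq_ite {K : ℕ} {x : ℝ≥0} {b : Bool}
    (h : b = true ↔ ∃ m : ℕ, m ≤ K ∧ x = m) : resetStep K x = if b then 0 else x := by
  cases b <;> simp_all [resetStep]

namespace Aapprox

variable {A : Type} {L : Set (TimedWord A)} {K : ℕ} {s : Setoid (TimedWord A)}

lemma steps_mk (u w : TimedWord A) :
    Steps (Aapprox L K s) (Quotient.mk s u, cKW K u) w
      (Quotient.mk s (u ++ w), cKW K (u ++ w)) := by
  induction w generalizing u with
  | nil => simpa using Steps.nil _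
  | cons p w ih =>
    obtain ⟨t, a⟩ := p
    have hreset : decide (∃ m : ℕ, m ≤ K ∧ cKW K u + t = m) = true ↔
        ∃ m : ℕ, m ≤ K ∧ cKW K u + t = m := decide_eq_true_iff
    refine Steps.cons ⟨Quotient.mk s u, Quotient.mk s (u ++ [(t, a)]), a,
        phiOf K (cKW K u + t), decide (∃ m : ℕ, m ≤ K ∧ cKW K u + t = m)⟩
      ⟨u, a, t, rfl, rfl, rfl, rfl, hreset⟩ rfl rfl (sat_phiOf_self K _) ?_
    rw [← resetStep_eq_ite hreset, ← cKW_append_singleton]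
    simpa using ih (u ++ [(t, a)])

lemma eq_of_steps (hmono : KMonotonic K s.r) {c c' : (Aapprox L K s).Q × ℝ≥0}
    {w : TimedWord A} (h : Steps (Aapprox L K s) c w c') (u : TimedWord A)
    (hc : c = (Quotient.mk s u, cKW K u)) :
    c' = (Quotient.mk s (u ++ w), cKW K (u ++ w)) := by
  induction h generalizing u with
  | nil => simpa using hc
  | @cons q ν t a w c θ hθ hsrc hlab hg hrest ih =>
    obtain ⟨rfl, rfl⟩ := Prod.mk.inj hc
    obtain ⟨u', a', t', hsrc', hdst, rfl, hguard, hreset⟩ := hθ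
    subst hlab
    have hu : s.r u' u := Quotient.exact (hsrc'.symm.trans hsrc)
    have hreg : RegEq K (cKW K u' + t') (cKW K u + t) := regEq_of_sat_phiOf (hguard ▸ hg)
    have hdst' : θ.dst = Quotient.mk s (u ++ [(t, θ.lab)]) :=
      hdst.trans (Quotient.sound ((hmono u' u hu).2 θ.lab t' t hreg))
    have hclock : (if θ.reset then 0 else cKW K u + t) = cKW K (u ++ [(t, θ.lab)]) := by
      rw [cKW_append_singleton, resetStep_eq_ite (hreset.trans hreg.exists_nat_le_iff)]
    simpa using ih (u ++ [(t, θ.lab)]) (by rw [hdst', hclock]; rfl)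

end Aapprox

theorem statement2_general {A : Type} (L : Set (TimedWord A)) (K : ℕ)
    (s : Setoid (TimedWord A)) (hpres : LPreserving L s.r) (hmono : KMonotonic K s.r) :
    (Aapprox L K s).Lang = L := by
  ext w
  constructor
  · rintro ⟨q, ν, hrun, u, hqu, huL⟩
    have hq : q = Quotient.mk s w := by
      simpa using congrArg Prod.fst (Aapprox.eq_of_steps hmono hrun [] rfl)
    exact (hpres w u (Quotient.exact (hq.symm.trans hqu))).2 huL
  · exact fun hw => ⟨Quotient.mk s w, cKW K w, Aapprox.steps_mk [] w, w, rfl, hw⟩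

/-- `A_≈` recognizes exactly `L`. -/
theorem statement2 {A : Type} [Finite A] (L : Set (TimedWord A)) (K : ℕ)
    (s : Setoid (TimedWord A)) (hpres : LPreserving L s.r) (hmono : KMonotonic K s.r)
    (hfin : FiniteIndex s.r) :
    (Aapprox L K s).Lang = L :=
  statement2_general L K s hpres hmono

end IRTA
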